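/- Let r > 0, v > 0, Γ > 0, Δ > 0, η ∈ (0,1), and 0 ≤ ℓ < h be real numbers. For k ∈ {ℓ, h} define π_k(q) = q·((1−η)·𝓛(k) − η·𝓐(k)) − η·Γ·(1 − √(1+k)·(1+r)/Δ), where 𝓛(f) = v·f·(1+r)·(2Δ − (r+2)·√(1+f))/Δ and 𝓐(f) = v·((Δ − √(1+f)·(1+r))·(Δ² + Δ·√(1+f)·(1+r) + (1+f)·(r−2)·(r+1)) + (1+f)^{3/2}·r²·(r+1))/(3Δ). If (1−η)·(𝓛(ℓ) − 𝓛(h)) + η·(𝓐(h) − 𝓐(ℓ)) ≤ 0, then π_ℓ(q) < π_h(q) for every q ≥ 0; that is, every liquidity provider strictly prefers the high-fee pool. -/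
import Mathlib


/-- The liquidity yield `𝓛`. -/
noncomputable def liqYield (v r Δ f : ℝ) : ℝ :=
  v * f * (1 + r) * (2 * Δ - (r + 2) * Real.sqrt (1 + f)) / Δ

/-- The adverse selection cost `𝓐`. -/
noncomputable def advSel (v r Δ f : ℝ) : ℝ :=
  v * ((Δ - Real.sqrt (1 + f) * (1 + r)) *
        (Δ ^ 2 + Δ * Real.sqrt (1 + f) * (1 + r) + (1 + f) * (r - 2) * (r + 1)) +
      (1 + f) ^ ((3 : ℝ) / 2) * r ^ 2 * (r + 1)) / (3 * Δ)

/-- Expected profit of a liquidity provider with endowment `q` on the pool with fee `k`. -/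
noncomputable def lpProfit (v r Δ Γ η k q : ℝ) : ℝ :=
  q * ((1 - η) * liqYield v r Δ k - η * advSel v r Δ k) -
    η * Γ * (1 - Real.sqrt (1 + k) * (1 + r) / Δ)

/-- Proposition 1(i): if `(1−η)·(𝓛(ℓ) − 𝓛(h)) + η·(𝓐(h) − 𝓐(ℓ)) ≤ 0`, then every
liquidity provider strictly prefers the high-fee pool: `π_ℓ(q) < π_h(q)` for all `q ≥ 0`. -/
theorem all_prefer_high_fee_pool
    (r v Γ Δ η ℓ h : ℝ) (hr : 0 < r) (hv : 0 < v) (hΓ : 0 < Γ) (hΔ : 0 < Δ)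
    (hη : η ∈ Set.Ioo (0 : ℝ) 1) (hℓ : 0 ≤ ℓ) (hℓh : ℓ < h)
    (hB : (1 - η) * (liqYield v r Δ ℓ - liqYield v r Δ h) +
        η * (advSel v r Δ h - advSel v r Δ ℓ) ≤ 0) :
    ∀ q : ℝ, 0 ≤ q → lpProfit v r Δ Γ η ℓ q < lpProfit v r Δ Γ η h q := by
  intro q hq
  obtain ⟨hη0, hη1⟩ := hη
  have hsq : Real.sqrt (1 + ℓ) < Real.sqrt (1 + h) :=
    Real.sqrt_lt_sqrt (by linarith) (by linarith)
  have h1 : q * ((1 - η) * (liqYield v r Δ ℓ - liqYield v r Δ h) +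
      η * (advSel v r Δ h - advSel v r Δ ℓ)) ≤ 0 := mul_nonpos_of_nonneg_of_nonpos hq hB
  have h2 : η * Γ * (Real.sqrt (1 + ℓ) * (1 + r) / Δ) <
      η * Γ * (Real.sqrt (1 + h) * (1 + r) / Δ) := by
    apply mul_lt_mul_of_pos_left _ (by positivity)
    rw [div_eq_mul_inv, div_eq_mul_inv]
    have hΔi : 0 < Δ⁻¹ := by positivity
    exact mul_lt_mul_of_pos_right
      (mul_lt_mul_of_pos_right hsq (by linarith)) hΔi
  simp only [lpProfit]
  nlinarith [h1, h2]
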